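/- arXiv:math/0306162 — 3 statements merged into one kernel-verified Lean document; each statement's English description precedes it below -/
import Mathlib

section
/- Let x, y ∈ V_ℂ both satisfy b(z,z) = 0 and b(z,z̄) > 0 (for z = x and z = y). If span_ℝ(Re x, Im x) = span_ℝ(Re y, Im y) and the ordered bases (Re x, Im x) and (Re y, Im y) of this plane induce the same orientation (the change-of-basis matrix has positive determinant), then y = λ·x for some nonzero λ ∈ ℂ. Conversely, for any nonzero λ ∈ ℂ the element y = λ·x spans the same plane with the same orientation. (Thus the oriented positive plane associated to a generalized Calabi–Yau class determines the class up to a nonzero complex scalar.) -/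
/-!
Statement 6: Let x, y ∈ V_ℂ both satisfy b(z,z) = 0 and b(z,z̄) > 0. If
span_ℝ(Re x, Im x) = span_ℝ(Re y, Im y) and the ordered bases (Re x, Im x), (Re y, Im y)
induce the same orientation (positive determinant change of basis), then y = λ·x for some
nonzero λ ∈ ℂ; and conversely, for nonzero λ, y = λ·x spans the same plane with the same
orientation.  (The oriented positive plane determines the class up to a nonzero complex
scalar.)
-/

open scoped TensorProduct ComplexOrder

set_option synthInstance.maxHeartbeats 1000000
set_option maxHeartbeats 1000000

noncomputable section

variable (V : Type) [AddCommGroup V] [Module ℝ V]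

/-- The complexification `V_ℂ = ℂ ⊗ V`. -/
abbrev VC := ℂ ⊗[ℝ] V

/-- Complex conjugation on `ℂ`, as an ℝ-linear map. -/
def conjR : ℂ →ₗ[ℝ] ℂ := Complex.conjAe.toLinearMap

/-- Complex conjugation on `V_ℂ`, fixing the real points `V`. -/
def cV : VC V →ₗ[ℝ] VC V := LinearMap.rTensor V conjR

/-- The canonical embedding `V → V_ℂ`. -/
def iV : V →ₗ[ℝ] VC V := TensorProduct.mk ℝ ℂ V 1

/-- The ℂ-bilinear extension of `b` to `V_ℂ`. -/
def bC (b : LinearMap.BilinForm ℝ V) : LinearMap.BilinForm ℂ (VC V) :=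
  LinearMap.BilinForm.baseChange ℂ b

lemma cV_iV (u : V) : cV V (iV V u) = iV V u := by simp [cV, iV, conjR]

lemma cV_I_iV (u : V) : cV V (Complex.I • iV V u) = -(Complex.I • iV V u) := by
  simp [cV, iV, conjR, TensorProduct.smul_tmul', TensorProduct.neg_tmul]

lemma bC_iV (b : LinearMap.BilinForm ℝ V) (u v : V) : bC V b (iV V u) (iV V v) = (b u v : ℂ) := by
  simp [bC, iV, Complex.real_smul]

def reV : VC V →ₗ[ℝ] V := (TensorProduct.lid ℝ V).toLinearMap ∘ₗ LinearMap.rTensor V Complex.reLm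
def imV : VC V →ₗ[ℝ] V := (TensorProduct.lid ℝ V).toLinearMap ∘ₗ LinearMap.rTensor V Complex.imLm

lemma reV_decomp (u w : V) : reV V (iV V u + Complex.I • iV V w) = u := by
  simp [reV, iV, TensorProduct.smul_tmul']
lemma imV_decomp (u w : V) : imV V (iV V u + Complex.I • iV V w) = w := by
  simp [imV, iV, TensorProduct.smul_tmul']

lemma smul_iV (l : ℂ) (u : V) :
    l • iV V u = iV V (l.re • u) + Complex.I • iV V (l.im • u) := by
  simp only [iV, TensorProduct.mk_apply, TensorProduct.tmul_smul, TensorProduct.smul_tmul']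
  rw [← TensorProduct.add_tmul]
  congr 1
  simp only [Complex.real_smul, smul_eq_mul, mul_one]
  rw [mul_comm, Complex.re_add_im]

lemma smul_decomp (l : ℂ) (u w : V) :
    l • (iV V u + Complex.I • iV V w) =
      iV V (l.re • u - l.im • w) + Complex.I • iV V (l.im • u + l.re • w) := by
  rw [smul_add, smul_smul, smul_iV V l, smul_iV V (l * Complex.I)]
  simp only [Complex.mul_re, Complex.mul_im, Complex.I_re, Complex.I_im, mul_zero, mul_one,
    zero_mul, zero_add, sub_zero, zero_sub, map_add, map_sub, neg_smul, map_neg, smul_add,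
    smul_neg, sub_eq_add_neg]
  abel_nf

lemma decomp_unique {u w u' w' : V}
    (h : iV V u + Complex.I • iV V w = iV V u' + Complex.I • iV V w') : u = u' ∧ w = w' := by
  constructor
  · have := congrArg (reV V) h; rwa [reV_decomp, reV_decomp] at this
  · have := congrArg (imV V) h; rwa [imV_decomp, imV_decomp] at this

lemma bC_decomp (b : LinearMap.BilinForm ℝ V) (u w u' w' : V) :
    bC V b (iV V u + Complex.I • iV V w) (iV V u' + Complex.I • iV V w') =
      Complex.mk (b u u' - b w w') (b u w' + b w u') := by
  simp only [map_add, LinearMap.add_apply, map_smul, LinearMap.smul_apply, bC_iV]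
  rw [Complex.ext_iff]
  simp [Complex.ext_iff, smul_eq_mul]
  constructor <;> ring

lemma cV_decomp (u w : V) :
    cV V (iV V u + Complex.I • iV V w) = iV V u + Complex.I • iV V (-w) := by
  rw [map_add, cV_iV, cV_I_iV, map_neg, smul_neg]

/-- From the two conditions on `z = zr + i·zi`, deduce the properties of the components. -/
lemma components_props (b : LinearMap.BilinForm ℝ V) (hsymm : ∀ u v : V, b u v = b v u)
    (zr zi : V)
    (h0 : bC V b (iV V zr + Complex.I • iV V zi) (iV V zr + Complex.I • iV V zi) = 0)
    (hpos : 0 < bC V b (iV V zr + Complex.I • iV V zi)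
      (cV V (iV V zr + Complex.I • iV V zi))) :
    b zr zi = 0 ∧ b zr zr = b zi zi ∧ 0 < b zr zr := by
  rw [bC_decomp] at h0
  rw [cV_decomp, bC_decomp] at hpos
  rw [Complex.ext_iff] at h0
  rw [Complex.lt_def] at hpos
  obtain ⟨h1, h2⟩ := h0
  obtain ⟨h3, _⟩ := hpos
  simp only [Complex.zero_re, Complex.zero_im, map_neg, LinearMap.neg_apply] at h1 h2 h3
  have hsym := hsymm zr zi
  refine ⟨by linarith, by linarith, by linarith⟩

lemma coeff_of_smul (xr xi yr yi : V) (l : ℂ)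
    (h : iV V yr + Complex.I • iV V yi = l • (iV V xr + Complex.I • iV V xi)) :
    yr = l.re • xr - l.im • xi ∧ yi = l.im • xr + l.re • xi :=
  decomp_unique V (h.trans (smul_decomp V l xr xi))

/-- For `x, y ∈ V_ℂ` with `b(x,x) = b(y,y) = 0`, `b(x,x̄) > 0`,
`b(y,y̅) > 0`, written `x = xr + i·xi`, `y = yr + i·yi` with real components: the plane
`span_ℝ(xr, xi)` equals `span_ℝ(yr, yi)` with matching orientation (positive determinant
change of basis) if and only if `y = λ·x` for some nonzero `λ ∈ ℂ`. -/
theorem class_determined_by_oriented_plane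
    (V : Type) [AddCommGroup V] [Module ℝ V] [FiniteDimensional ℝ V]
    (b : LinearMap.BilinForm ℝ V) (hsymm : ∀ u v : V, b u v = b v u)
    (x y : VC V)
    (hx0 : bC V b x x = 0) (hxpos : 0 < bC V b x (cV V x))
    (hy0 : bC V b y y = 0) (hypos : 0 < bC V b y (cV V y))
    (xr xi yr yi : V)
    (hxdec : x = iV V xr + Complex.I • iV V xi)
    (hydec : y = iV V yr + Complex.I • iV V yi) :
    ((Submodule.span ℝ ({xr, xi} : Set V) = Submodule.span ℝ ({yr, yi} : Set V)) ∧
      (∃ a b' c d : ℝ, yr = a • xr + b' • xi ∧ yi = c • xr + d • xi ∧ 0 < a * d - b' * c))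
    ↔ (∃ l : ℂ, l ≠ 0 ∧ y = l • x) := by
  subst hxdec hydec
  obtain ⟨hxio, hxs, hxpos'⟩ := components_props V b hsymm xr xi hx0 hxpos
  obtain ⟨hyio, hys, hypos'⟩ := components_props V b hsymm yr yi hy0 hypos
  have hxii : b xi xi = b xr xr := hxs.symm
  have hxiro : b xi xr = 0 := (hsymm xi xr).trans hxio
  constructor
  · rintro ⟨hspan, a, b', c, d, hyr, hyi, hdet⟩
    -- compute the bilinear values of y's components
    have hyrr : b yr yr = (a * a + b' * b') * b xr xr := by
      rw [hyr]
      simp only [map_add, map_smul, LinearMap.add_apply, LinearMap.smul_apply, smul_eq_mul]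
      rw [hxio, hxiro, hxii]; ring
    have hyii : b yi yi = (c * c + d * d) * b xr xr := by
      rw [hyi]
      simp only [map_add, map_smul, LinearMap.add_apply, LinearMap.smul_apply, smul_eq_mul]
      rw [hxio, hxiro, hxii]; ring
    have hyri : b yr yi = (a * c + b' * d) * b xr xr := by
      rw [hyr, hyi]
      simp only [map_add, map_smul, LinearMap.add_apply, LinearMap.smul_apply, smul_eq_mul]
      rw [hxio, hxiro, hxii]; ring
    have hs : (0 : ℝ) < b xr xr := hxpos'
    have e1 : a * a + b' * b' = c * c + d * d := by
      have := hys; rw [hyrr, hyii] at this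
      exact mul_right_cancel₀ (ne_of_gt hs) this
    have e2 : a * c + b' * d = 0 := by
      have := hyio; rw [hyri] at this
      rcases mul_eq_zero.mp this with h | h
      · exact h
      · exact absurd h (ne_of_gt hs)
    have e3 : 0 < a * a + b' * b' := by
      have := hypos'; rw [hyrr] at this
      nlinarith
    have key : a * d - b' * c = a * a + b' * b' := by
      nlinarith [sq_nonneg (a * d - b' * c - (a * a + b' * b')),
        sq_nonneg (a * d - b' * c + (a * a + b' * b'))]
    have hd : d = a := by nlinarith [sq_nonneg (d - a), sq_nonneg (c + b')]
    have hc : c = -b' := by nlinarith [sq_nonneg (d - a), sq_nonneg (c + b')]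
    refine ⟨⟨a, c⟩, ?_, ?_⟩
    · intro h
      rw [Complex.ext_iff] at h
      obtain ⟨h1, h2⟩ := h
      simp only [Complex.zero_re, Complex.zero_im] at h1 h2
      have hb0 : b' = 0 := by rw [h2] at hc; linarith
      rw [h1, hb0] at e3; norm_num at e3
    · rw [smul_decomp, hyr, hyi]
      have hre : (⟨a, c⟩ : ℂ).re = a := rfl
      have him : (⟨a, c⟩ : ℂ).im = c := rfl
      rw [hre, him, hd, hc]
      simp only [neg_smul, sub_neg_eq_add]
  · rintro ⟨l, hl, hyx⟩
    have hlinv : iV V xr + Complex.I • iV V xi = l⁻¹ • (iV V yr + Complex.I • iV V yi) := by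
      rw [hyx, smul_smul, inv_mul_cancel₀ hl, one_smul]
    obtain ⟨hyr, hyi⟩ := coeff_of_smul V xr xi yr yi l hyx
    obtain ⟨hxr, hxi⟩ := coeff_of_smul V yr yi xr xi l⁻¹ hlinv
    constructor
    · apply le_antisymm
      · rw [Submodule.span_le]
        rintro v (rfl | rfl)
        · rw [SetLike.mem_coe, Submodule.mem_span_pair]
          exact ⟨(l⁻¹).re, -(l⁻¹).im, by rw [hxr]; rw [neg_smul, sub_eq_add_neg]⟩
        · rw [SetLike.mem_coe, Submodule.mem_span_pair]
          exact ⟨(l⁻¹).im, (l⁻¹).re, by rw [hxi]⟩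
      · rw [Submodule.span_le]
        rintro v (rfl | rfl)
        · rw [SetLike.mem_coe, Submodule.mem_span_pair]
          exact ⟨l.re, -l.im, by rw [hyr]; rw [neg_smul, sub_eq_add_neg]⟩
        · rw [SetLike.mem_coe, Submodule.mem_span_pair]
          exact ⟨l.im, l.re, by rw [hyi]⟩
    · refine ⟨l.re, -l.im, l.im, l.re, by rw [hyr, neg_smul, sub_eq_add_neg],
        hyi, ?_⟩
      have : l.re * l.re + l.im * l.im > 0 := by
        have := Complex.normSq_pos.mpr hl
        simpa [Complex.normSq_apply] using this
      nlinarith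

end
end

section
/- Let ω, ω', B' ∈ ⋀²V with ω∧ω > 0. The planes P_{exp(iω)} and P_{exp(B'+iω')} are Mukai-orthogonal if and only if B'∧ω = 0, ω'∧ω = 0, B'∧ω' = 0, and B'∧B' = ω∧ω + ω'∧ω'. (Thus a Kähler structure exp(B'+iω') for the generalized Calabi–Yau structure exp(iω) is characterized by these four equations.) -/
/-!
Statement 9: Let ω, ω', B' ∈ ⋀²V with ω∧ω > 0. The planes P_{exp(iω)} and P_{exp(B'+iω')}
(spanned by the real and imaginary parts of exp(iω) resp. exp(B'+iω') inside the real even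
forms ℝ ⊕ ⋀²V ⊕ ⋀⁴V) are Mukai-orthogonal if and only if B'∧ω = 0, ω'∧ω = 0, B'∧ω' = 0 and
B'∧B' = ω∧ω + ω'∧ω'.

Here Re exp(iω) = (1, 0, −(1/2)·ω∧ω), Im exp(iω) = (0, ω, 0), and
Re exp(B'+iω') = (1, B', (1/2)·(B'∧B' − ω'∧ω')), Im exp(B'+iω') = (0, ω', B'∧ω').
-/

set_option synthInstance.maxHeartbeats 1000000
set_option maxHeartbeats 1000000

noncomputable section

variable (V : Type) [AddCommGroup V] [Module ℝ V]

/-- The wedge product of two exterior 2-forms, landing in exterior degree 4. -/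
def wedgeFun (x y : ⋀[ℝ]^2 V) : ⋀[ℝ]^4 V :=
  ⟨x.1 * y.1, by
    have h := Submodule.mul_mem_mul x.2 y.2
    rwa [← pow_add] at h⟩

/-- The wedge product `⋀²V × ⋀²V → ⋀⁴V` as a bilinear map. -/
def wedge : ⋀[ℝ]^2 V →ₗ[ℝ] ⋀[ℝ]^2 V →ₗ[ℝ] ⋀[ℝ]^4 V :=
  LinearMap.mk₂ ℝ (wedgeFun V)
    (fun x x' y => Subtype.ext (by simp [wedgeFun, add_mul]))
    (fun c x y => Subtype.ext (by simp [wedgeFun, smul_mul_assoc]))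
    (fun x y y' => Subtype.ext (by simp [wedgeFun, mul_add]))
    (fun c x y => Subtype.ext (by simp [wedgeFun, mul_smul_comm]))

/-- The real even forms `ℝ ⊕ ⋀²V ⊕ ⋀⁴V`. -/
abbrev EvenFormR := ℝ × (⋀[ℝ]^2 V) × (⋀[ℝ]^4 V)

/-- The Mukai pairing on real even forms. -/
def mukaiR (φ ψ : EvenFormR V) : ⋀[ℝ]^4 V :=
  -(φ.1 • ψ.2.2) + wedge V φ.2.1 ψ.2.1 - (ψ.1 • φ.2.2)

/-- Positivity in `⋀⁴V`, relative to a positive generator `ν` (an orientation of `V`). -/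
def PosR (ν p : ⋀[ℝ]^4 V) : Prop :=
  ∃ c : ℝ, 0 < c ∧ p = c • ν


open ExteriorAlgebra in
lemma ι_mul_pow (v : V) {n : ℕ} {y : ExteriorAlgebra ℝ V}
    (hy : y ∈ (LinearMap.range (ι ℝ (M := V)) : Submodule ℝ (ExteriorAlgebra ℝ V)) ^ n) :
    ι ℝ v * y = ((-1 : ℝ) ^ n) • (y * ι ℝ v) := by
  induction hy using Submodule.pow_induction_on_left' with
  | algebraMap r => simp [Algebra.commutes]
  | add x z i hx hz ihx ihz => simp [mul_add, add_mul, ihx, ihz]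
  | mem_mul m hm i x hx ih =>
      obtain ⟨w, rfl⟩ := hm
      have hswap : ι ℝ v * ι ℝ w = -(ι ℝ w * ι ℝ v) := by
        have := ExteriorAlgebra.ι_add_mul_swap (R := ℝ) v w
        linear_combination (norm := noncomm_ring) this
      calc ι ℝ v * (ι ℝ w * x) = (ι ℝ v * ι ℝ w) * x := by rw [mul_assoc]
        _ = -(ι ℝ w * (ι ℝ v * x)) := by rw [hswap]; noncomm_ring
        _ = -(ι ℝ w * (((-1:ℝ)^i) • (x * ι ℝ v))) := by rw [ih]
        _ = ((-1:ℝ)^(i+1)) • (ι ℝ w * x * ι ℝ v) := by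
              rw [mul_smul_comm, pow_succ]
              simp [mul_assoc, smul_smul]

open ExteriorAlgebra in
lemma mul_comm_deg2 {x y : ExteriorAlgebra ℝ V} (hx : x ∈ ⋀[ℝ]^2 V) (hy : y ∈ ⋀[ℝ]^2 V) :
    x * y = y * x := by
  refine Submodule.pow_induction_on_left
    (M := LinearMap.range (ι ℝ : V →ₗ[ℝ] ExteriorAlgebra ℝ V)) (n := 2)
    (C := fun x => x * y = y * x) (fun r => ?_) (fun a b iha ihb => ?_)
    (fun m hm a ih => ?_) hx
  · simp [Algebra.commutes]
  · simp [add_mul, mul_add, iha, ihb]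
  · obtain ⟨v, rfl⟩ := hm
    have h := ι_mul_pow V v hy
    have h2 : ι ℝ v * y = y * ι ℝ v := by rw [h]; norm_num
    calc ι ℝ v * a * y = ι ℝ v * (a * y) := by rw [mul_assoc]
      _ = ι ℝ v * (y * a) := by rw [ih]
      _ = (ι ℝ v * y) * a := by rw [mul_assoc]
      _ = y * (ι ℝ v * a) := by rw [h2, mul_assoc]

lemma wedge_comm (x y : ⋀[ℝ]^2 V) : wedge V x y = wedge V y x :=
  Subtype.ext (mul_comm_deg2 V x.2 y.2)

lemma mukaiR_add_left (a b y : EvenFormR V) :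
    mukaiR V (a + b) y = mukaiR V a y + mukaiR V b y := by
  simp only [mukaiR, Prod.fst_add, Prod.snd_add, add_smul, smul_add, map_add,
    LinearMap.add_apply]
  module

lemma mukaiR_smul_left (c : ℝ) (a y : EvenFormR V) :
    mukaiR V (c • a) y = c • mukaiR V a y := by
  simp only [mukaiR, Prod.smul_fst, Prod.smul_snd, smul_smul, map_smul,
    LinearMap.smul_apply, smul_eq_mul, mul_comm]
  module

lemma mukaiR_zero_left (y : EvenFormR V) : mukaiR V 0 y = 0 := by
  simp [mukaiR]

lemma mukaiR_add_right (a b y : EvenFormR V) :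
    mukaiR V y (a + b) = mukaiR V y a + mukaiR V y b := by
  simp only [mukaiR, Prod.fst_add, Prod.snd_add, add_smul, smul_add, map_add,
    LinearMap.add_apply]
  module

lemma mukaiR_smul_right (c : ℝ) (a y : EvenFormR V) :
    mukaiR V y (c • a) = c • mukaiR V y a := by
  simp only [mukaiR, Prod.smul_fst, Prod.smul_snd, smul_smul, map_smul,
    LinearMap.smul_apply, smul_eq_mul, mul_comm]
  module

lemma mukaiR_zero_right (y : EvenFormR V) : mukaiR V y 0 = 0 := by
  simp [mukaiR]

/-- For `ω, ω', B' ∈ ⋀²V` with `ω∧ω > 0`, the planes `P_{exp(iω)}` and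
`P_{exp(B'+iω')}` are Mukai-orthogonal iff `B'∧ω = 0`, `ω'∧ω = 0`, `B'∧ω' = 0` and
`B'∧B' = ω∧ω + ω'∧ω'`. -/
theorem kahler_structure_orthogonality
    (V : Type) [AddCommGroup V] [Module ℝ V] [FiniteDimensional ℝ V]
    (hdim : Module.finrank ℝ V = 4)
    (ν : ⋀[ℝ]^4 V) (hν : ν ≠ 0)
    (ω ω' B' : ⋀[ℝ]^2 V)
    (hω : PosR V ν (wedge V ω ω)) :
    (∀ x ∈ Submodule.span ℝ
        ({((1 : ℝ), (0 : ⋀[ℝ]^2 V), -((1/2 : ℝ) • wedge V ω ω)),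
          ((0 : ℝ), ω, (0 : ⋀[ℝ]^4 V))} : Set (EvenFormR V)),
      ∀ y ∈ Submodule.span ℝ
        ({((1 : ℝ), B', (1/2 : ℝ) • (wedge V B' B' - wedge V ω' ω')),
          ((0 : ℝ), ω', wedge V B' ω')} : Set (EvenFormR V)),
        mukaiR V x y = 0)
    ↔ (wedge V B' ω = 0 ∧ wedge V ω' ω = 0 ∧ wedge V B' ω' = 0 ∧
        wedge V B' B' = wedge V ω ω + wedge V ω' ω') := by
  constructor
  · intro h
    have mem1x : ((1 : ℝ), (0 : ⋀[ℝ]^2 V), -((1/2 : ℝ) • wedge V ω ω)) ∈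
        Submodule.span ℝ ({((1 : ℝ), (0 : ⋀[ℝ]^2 V), -((1/2 : ℝ) • wedge V ω ω)),
          ((0 : ℝ), ω, (0 : ⋀[ℝ]^4 V))} : Set (EvenFormR V)) :=
      Submodule.subset_span (Set.mem_insert _ _)
    have mem2x : ((0 : ℝ), ω, (0 : ⋀[ℝ]^4 V)) ∈
        Submodule.span ℝ ({((1 : ℝ), (0 : ⋀[ℝ]^2 V), -((1/2 : ℝ) • wedge V ω ω)),
          ((0 : ℝ), ω, (0 : ⋀[ℝ]^4 V))} : Set (EvenFormR V)) :=
      Submodule.subset_span (Set.mem_insert_of_mem _ rfl)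
    have mem1y : ((1 : ℝ), B', (1/2 : ℝ) • (wedge V B' B' - wedge V ω' ω')) ∈
        Submodule.span ℝ ({((1 : ℝ), B', (1/2 : ℝ) • (wedge V B' B' - wedge V ω' ω')),
          ((0 : ℝ), ω', wedge V B' ω')} : Set (EvenFormR V)) :=
      Submodule.subset_span (Set.mem_insert _ _)
    have mem2y : ((0 : ℝ), ω', wedge V B' ω') ∈
        Submodule.span ℝ ({((1 : ℝ), B', (1/2 : ℝ) • (wedge V B' B' - wedge V ω' ω')),
          ((0 : ℝ), ω', wedge V B' ω')} : Set (EvenFormR V)) :=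
      Submodule.subset_span (Set.mem_insert_of_mem _ rfl)
    have h11 := h _ mem1x _ mem1y
    have h12 := h _ mem1x _ mem2y
    have h21 := h _ mem2x _ mem1y
    have h22 := h _ mem2x _ mem2y
    simp only [mukaiR, one_smul, zero_smul, map_zero, LinearMap.zero_apply, smul_zero,
      neg_zero, add_zero, zero_add, sub_zero, zero_sub, neg_neg, neg_add_eq_zero,
      neg_eq_zero] at h11 h12 h21 h22
    refine ⟨?_, ?_, h12, ?_⟩
    · rw [wedge_comm]; simpa using h21
    · rw [wedge_comm]; simpa using h22
    · linear_combination (norm := module) (-2:ℝ) • h11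
  · rintro ⟨h1, h2, h3, h4⟩ x hx
    induction hx using Submodule.span_induction with
    | zero => intro y _; exact mukaiR_zero_left V y
    | add a b _ _ iha ihb =>
        intro y hy
        rw [mukaiR_add_left, iha y hy, ihb y hy, add_zero]
    | smul c a _ iha =>
        intro y hy
        rw [mukaiR_smul_left, iha y hy, smul_zero]
    | mem a ha =>
        intro y hy
        induction hy using Submodule.span_induction with
        | zero => exact mukaiR_zero_right V a
        | add b c _ _ ihb ihc => rw [mukaiR_add_right, ihb, ihc, add_zero]
        | smul c b _ ihb => rw [mukaiR_smul_right, ihb, smul_zero]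
        | mem b hb =>
            simp only [Set.mem_insert_iff, Set.mem_singleton_iff] at ha hb
            rcases ha with rfl | rfl <;> rcases hb with rfl | rfl
            · simp only [mukaiR, one_smul, map_zero, LinearMap.zero_apply, h4]
              module
            · simp only [mukaiR, one_smul, zero_smul, map_zero, LinearMap.zero_apply,
                smul_zero, h3]
              module
            · have hc : wedge V ω B' = 0 := by rw [wedge_comm]; exact h1
              simp only [mukaiR, one_smul, zero_smul, smul_zero, hc]
              module
            · have hc : wedge V ω ω' = 0 := by rw [wedge_comm]; exact h2
              simp only [mukaiR, zero_smul, smul_zero, hc]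
              module


end
end

section
/- Assume b is nondegenerate and let φ ∈ V_ℂ satisfy b(φ,φ) = 0 and b(φ,φ̄) > 0. Set T_φ := {α ∈ V_ℂ : b(α,φ) = 0 and b(α,φ̄) = 0}. Then V_ℂ = ℂφ ⊕ ℂφ̄ ⊕ T_φ, and the alternating real bilinear form Ω(α,β) := Im b(α, β̄) is nondegenerate on T_φ viewed as a real vector space. (T_φ models the tangent space of the moduli space of generalized Calabi–Yau structures at φ, and Ω its symplectic structure.) -/
/-!
The pair `(φ, φ̄)` is hyperbolic for the symmetric form `b_ℂ`: both vectors are isotropic, since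
`b(φ̄, φ̄) = conj b(φ, φ) = 0`, and `b(φ, φ̄) ≠ 0`. Hence
`x ↦ (b(x, φ̄) / b(φ, φ̄)) φ + (b(x, φ) / b(φ, φ̄)) φ̄` projects `V_ℂ` onto `ℂφ ⊕ ℂφ̄` with kernel
`T_φ`.

`T_φ` is stable under conjugation, so if `Im b(α, β̄) = 0` for all `β ∈ T_φ`, testing `β = γ̄` and
`β = i γ̄` gives `b(α, γ) = 0` for all `γ ∈ T_φ`. For `α ∈ T_φ` this makes `α` orthogonal to all of
`V_ℂ`, and `b_ℂ` is nondegenerate because its Gram matrix in a real basis is that of `b`.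
-/

open scoped TensorProduct ComplexOrder

set_option synthInstance.maxHeartbeats 1000000
set_option maxHeartbeats 1000000

noncomputable section

variable (V : Type) [AddCommGroup V] [Module ℝ V]

/-- The subspace `T_φ = {α : b(α,φ) = 0 = b(α,φ̄)}` of `V_ℂ`. -/
def Tspace (b : LinearMap.BilinForm ℝ V) (φ : VC V) : Submodule ℂ (VC V) :=
  LinearMap.ker ((bC V b).flip φ) ⊓ LinearMap.ker ((bC V b).flip (cV V φ))

namespace LinearMap.BilinForm

variable {K M : Type*} [Field K] [AddCommGroup M] [Module K M]
  {B : LinearMap.BilinForm K M} {φ ψ : M}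

lemma mem_ker_flip_inf_ker_flip {x : M} :
    x ∈ ker (B.flip φ) ⊓ ker (B.flip ψ) ↔ B x φ = 0 ∧ B x ψ = 0 := by
  simp

lemma span_singleton_inf_span_singleton_eq_bot (hψ : B ψ ψ = 0) (hφψ : B φ ψ ≠ 0) :
    K ∙ φ ⊓ K ∙ ψ = ⊥ := by
  refine (Submodule.eq_bot_iff _).2 fun x hx => ?_
  obtain ⟨⟨z, rfl⟩, ⟨w, hw⟩⟩ := Submodule.mem_inf.1 hx |>.imp
    Submodule.mem_span_singleton.1 Submodule.mem_span_singleton.1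
  have : z * B φ ψ = w * B ψ ψ := by simpa using congrArg (B · ψ) hw.symm
  rw [hψ, mul_zero, mul_eq_zero] at this
  simp [this.resolve_right hφψ]

section HyperbolicPair

lemma apply_smul_add_smul_left (hB : LinearMap.IsSymm B) (hφ : B φ φ = 0) (z w : K) :
    B (z • φ + w • ψ) φ = w * B φ ψ := by
  simp [hφ, ← hB.eq ψ φ]

lemma apply_smul_add_smul_right (hψ : B ψ ψ = 0) (z w : K) :
    B (z • φ + w • ψ) ψ = z * B φ ψ := by
  simp [hψ]

variable (hB : LinearMap.IsSymm B) (hφ : B φ φ = 0) (hψ : B ψ ψ = 0) (hφψ : B φ ψ ≠ 0)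
include hB hφ hψ hφψ

lemma isCompl_span_pair_ker_flip_inf_ker_flip :
    IsCompl (Submodule.span K {φ, ψ}) (ker (B.flip φ) ⊓ ker (B.flip ψ)) := by
  constructor
  · refine Submodule.disjoint_def.2 fun x hx hxT => ?_
    obtain ⟨z, w, rfl⟩ := Submodule.mem_span_pair.1 hx
    rw [mem_ker_flip_inf_ker_flip, apply_smul_add_smul_left hB hφ,
      apply_smul_add_smul_right hψ] at hxT
    simp [(mul_eq_zero.1 hxT.1).resolve_right hφψ, (mul_eq_zero.1 hxT.2).resolve_right hφψ]
  · refine codisjoint_iff.2 <| Submodule.eq_top_iff'.2 fun x => Submodule.mem_sup.2 ?_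
    set p := (B x ψ / B φ ψ) • φ + (B x φ / B φ ψ) • ψ
    refine ⟨p, Submodule.mem_span_pair.2 ⟨_, _, rfl⟩, x - p, ?_, add_sub_cancel _ _⟩
    rw [mem_ker_flip_inf_ker_flip, map_sub, LinearMap.sub_apply, LinearMap.sub_apply,
      apply_smul_add_smul_left hB hφ, apply_smul_add_smul_right hψ,
      div_mul_cancel₀ _ hφψ, div_mul_cancel₀ _ hφψ, sub_self, sub_self]
    exact ⟨rfl, rfl⟩

lemma eq_zero_of_mem_ker_flip_inf_ker_flip_of_forall_apply_eq_zero (hB' : B.SeparatingLeft)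
    {α : M} (hα : α ∈ ker (B.flip φ) ⊓ ker (B.flip ψ))
    (h : ∀ γ ∈ ker (B.flip φ) ⊓ ker (B.flip ψ), B α γ = 0) : α = 0 := by
  refine hB' α fun y => ?_
  have hspan : Submodule.span K {φ, ψ} ≤ ker (B α) := by
    rw [Submodule.span_le]
    rintro _ (rfl | rfl)
    exacts [(mem_ker_flip_inf_ker_flip.1 hα).1, (mem_ker_flip_inf_ker_flip.1 hα).2]
  have htop : ⊤ ≤ ker (B α) :=
    (isCompl_span_pair_ker_flip_inf_ker_flip hB hφ hψ hφψ).sup_eq_top ▸ sup_le hspan h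
  exact htop Submodule.mem_top

end HyperbolicPair

lemma Nondegenerate.baseChange {L : Type*} [Field L] [Algebra K L] [FiniteDimensional K M]
    (hB : B.Nondegenerate) : (B.baseChange L).Nondegenerate := by
  classical
  let e := Module.finBasis K M
  have hmat : BilinForm.toMatrix (e.baseChange L) (B.baseChange L) =
      (BilinForm.toMatrix e B).map (algebraMap K L) := by
    ext i j
    simp [BilinForm.toMatrix_apply, Algebra.smul_def]
  rw [nondegenerate_iff_det_ne_zero (e.baseChange L), hmat, ← RingHom.mapMatrix_apply,
    ← RingHom.map_det]
  exact (map_ne_zero _).2 ((nondegenerate_iff_det_ne_zero e).1 hB)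

end LinearMap.BilinForm

variable {V}

lemma cV_tmul (z : ℂ) (v : V) : cV V (z ⊗ₜ v) = starRingEnd ℂ z ⊗ₜ v := rfl

lemma cV_cV (x : VC V) : cV V (cV V x) = x := by
  induction x using TensorProduct.induction_on with
  | zero => simp
  | tmul z v => simp [cV_tmul]
  | add x y hx hy => simp only [map_add, hx, hy]

lemma cV_smul (z : ℂ) (x : VC V) : cV V (z • x) = starRingEnd ℂ z • cV V x := by
  induction x using TensorProduct.induction_on with
  | zero => simp
  | tmul w v => simp [TensorProduct.smul_tmul', cV_tmul]
  | add x y hx hy => simp only [smul_add, map_add, hx, hy]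

lemma bC_cV_cV (b : LinearMap.BilinForm ℝ V) (x y : VC V) :
    bC V b (cV V x) (cV V y) = starRingEnd ℂ (bC V b x y) := by
  induction x using TensorProduct.induction_on with
  | zero => simp
  | tmul z u =>
    induction y using TensorProduct.induction_on with
    | zero => simp
    | tmul w v => simp [cV_tmul, bC, Complex.real_smul]
    | add y y' hy hy' => simp only [map_add, hy, hy']
  | add x x' hx hx' => simp only [map_add, LinearMap.add_apply, hx, hx']

lemma cV_mem_Tspace {b : LinearMap.BilinForm ℝ V} {φ γ : VC V} (hγ : γ ∈ Tspace V b φ) :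
    cV V γ ∈ Tspace V b φ := by
  obtain ⟨h, h'⟩ := LinearMap.BilinForm.mem_ker_flip_inf_ker_flip.1 hγ
  refine LinearMap.BilinForm.mem_ker_flip_inf_ker_flip.2 ⟨?_, ?_⟩
  · rw [← cV_cV φ, bC_cV_cV, h', map_zero]
  · rw [bC_cV_cV, h, map_zero]

lemma apply_eq_zero_of_forall_im_apply_cV_eq_zero (B : LinearMap.BilinForm ℂ (VC V))
    {T : Submodule ℂ (VC V)} (hT : ∀ γ ∈ T, cV V γ ∈ T) {α : VC V}
    (h : ∀ β ∈ T, (B α (cV V β)).im = 0) {γ : VC V} (hγ : γ ∈ T) : B α γ = 0 := by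
  have him := h (cV V γ) (hT γ hγ)
  have hre := h (Complex.I • cV V γ) (T.smul_mem _ (hT γ hγ))
  rw [cV_cV] at him
  rw [cV_smul, cV_cV, map_smul, smul_eq_mul, Complex.mul_im] at hre
  exact Complex.ext (by simpa using hre) him

/-- For `φ ∈ V_ℂ` with `b(φ,φ) = 0` and `b(φ,φ̄) > 0`, the space `V_ℂ`
decomposes as `ℂφ ⊕ ℂφ̄ ⊕ T_φ`, and `Ω(α,β) := Im b(α,β̄)` is nondegenerate on `T_φ`. -/
theorem tangent_space_decomposition_and_symplectic
    (V : Type) [AddCommGroup V] [Module ℝ V] [FiniteDimensional ℝ V]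
    (b : LinearMap.BilinForm ℝ V) (hsymm : ∀ u v : V, b u v = b v u)
    (hnd : LinearMap.BilinForm.Nondegenerate b)
    (φ : VC V) (hφ0 : bC V b φ φ = 0) (hφpos : 0 < bC V b φ (cV V φ)) :
    (Submodule.span ℂ ({φ} : Set (VC V)) ⊓ Submodule.span ℂ ({cV V φ} : Set (VC V)) = ⊥) ∧
    IsCompl (Submodule.span ℂ ({φ, cV V φ} : Set (VC V))) (Tspace V b φ) ∧
    (∀ α ∈ Tspace V b φ,
      (∀ β ∈ Tspace V b φ, (bC V b α (cV V β)).im = 0) → α = 0) := by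
  have hB : LinearMap.IsSymm (bC V b) := LinearMap.BilinForm.IsSymm.baseChange ℂ ⟨hsymm⟩
  have hφ' : bC V b (cV V φ) (cV V φ) = 0 := by rw [bC_cV_cV, hφ0, map_zero]
  have hφφ' : bC V b φ (cV V φ) ≠ 0 := hφpos.ne'
  refine ⟨LinearMap.BilinForm.span_singleton_inf_span_singleton_eq_bot hφ' hφφ',
    LinearMap.BilinForm.isCompl_span_pair_ker_flip_inf_ker_flip hB hφ0 hφ' hφφ',
    fun α hα hIm => ?_⟩
  have hαT : ∀ γ ∈ Tspace V b φ, bC V b α γ = 0 := fun _ =>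
    apply_eq_zero_of_forall_im_apply_cV_eq_zero _ (fun _ => cV_mem_Tspace) hIm
  exact LinearMap.BilinForm.eq_zero_of_mem_ker_flip_inf_ker_flip_of_forall_apply_eq_zero
    hB hφ0 hφ' hφφ' hnd.baseChange.1 hα hαT

end
end
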